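/- Fix n₃ ≥ 1 and an orthogonal matrix M ∈ ℝ^{n₃×n₃} (MᵀM = I). Let A be a ⋆_M-positive semidefinite tensor of size n × n × n₃, let λ ∈ ℝ^{n₃} be a tube, and let X be a tensor of size n × 1 × n₃ such that A ⋆_M X = λ ⋆_M X (where λ ⋆_M X denotes the tensor with tubes λ ⋆_M X_{i,1}) and such that for each k ∈ {1,…,n₃} the k-th frontal slice of X ×₃ M is a nonzero vector in ℝⁿ. Then λ is a square in ℝ_M, i.e. λ = x ⋆_M x for some x ∈ ℝ^{n₃}. -/

import Mathlib

/-!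
Under `a ↦ M *ᵥ a` the `⋆_M`-product becomes the entrywise product, so the eigen-equation reads
`(A ⋆_M X)^ᵢₖ = λ̂ₖ X̂ᵢₖ` on every frontal slice `k`. Testing positive semidefiniteness on the part
of `X` supported on slice `k` alone gives, since an orthogonal `M` preserves the inner product,
`0 ≤ λ̂ₖ ∑ᵢ X̂ᵢₖ²` with a positive sum. Hence `λ̂ ≥ 0` entrywise and `x = M⁻¹ √λ̂` squares to `λ`.
-/

open Matrix BigOperators Kronecker

noncomputable section

/-- The tubal `⋆_M`-product of tubes `a, b : Fin n₃ → R`: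
`a ⋆_M b = M⁻¹ *ᵥ ((M *ᵥ a) ⊙ (M *ᵥ b))`, where `⊙` is the entrywise product. -/
def tubMul {n₃ : ℕ} {R : Type} [CommRing R] (M : Matrix (Fin n₃) (Fin n₃) R)
    (a b : Fin n₃ → R) : Fin n₃ → R :=
  M⁻¹ *ᵥ ((M *ᵥ a) * (M *ᵥ b))

/-- The tensor `⋆_M`-product of an `ι × κ × n₃` tensor with a `κ × μ × n₃` tensor. -/
def tenMul {n₃ : ℕ} {R : Type} [CommRing R] {ι κ μ : Type} [Fintype κ]
    (M : Matrix (Fin n₃) (Fin n₃) R)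
    (A : ι → κ → (Fin n₃ → R)) (B : κ → μ → (Fin n₃ → R)) : ι → μ → (Fin n₃ → R) :=
  fun i j => ∑ ℓ, tubMul M (A i ℓ) (B ℓ j)

/-- The `⋆_M`-transpose of a tensor. -/
def tenTrans {ι κ γ : Type} (A : ι → κ → γ) : κ → ι → γ := fun i j => A j i

/-- The inner product of two same-size third order tensors. -/
def tenInner {n₃ : ℕ} {ι κ : Type} [Fintype ι] [Fintype κ]
    (A B : ι → κ → (Fin n₃ → ℝ)) : ℝ :=
  ∑ i, ∑ j, ∑ k, A i j k * B i j k

/-- A square tensor is `⋆_M`-positive semidefinite if it is `⋆_M`-symmetric and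
`⟨X, A ⋆_M X⟩ ≥ 0` for all `X` of size `n × 1 × n₃`. -/
def tenPSD {n₃ : ℕ} {ι : Type} [Fintype ι] (M : Matrix (Fin n₃) (Fin n₃) ℝ)
    (A : ι → ι → (Fin n₃ → ℝ)) : Prop :=
  tenTrans A = A ∧ ∀ X : ι → Fin 1 → (Fin n₃ → ℝ), 0 ≤ tenInner X (tenMul M A X)

/-- The multiplicative identity tube `e_M = M⁻¹ 𝟙`. -/
def tubOne {n₃ : ℕ} (M : Matrix (Fin n₃) (Fin n₃) ℝ) : Fin n₃ → ℝ :=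
  M⁻¹ *ᵥ (fun _ => 1)

/-- The `⋆_M`-identity tensor. -/
def tenId {n₃ : ℕ} {ι : Type} [DecidableEq ι] (M : Matrix (Fin n₃) (Fin n₃) ℝ) :
    ι → ι → (Fin n₃ → ℝ) :=
  fun i j => if i = j then tubOne M else 0

/-- The block matricization `mat_M(A)`: the `(i,j)` block is `diag(M *ᵥ A i j)`. -/
def tenMat {n₃ : ℕ} {ι κ : Type} (M : Matrix (Fin n₃) (Fin n₃) ℝ)
    (A : ι → κ → (Fin n₃ → ℝ)) : Matrix (ι × Fin n₃) (κ × Fin n₃) ℝ :=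
  Matrix.of fun p q => if p.2 = q.2 then (M *ᵥ A p.1 q.1) p.2 else 0

section Transform

variable {n₃ : ℕ} {R : Type} [CommRing R] {M : Matrix (Fin n₃) (Fin n₃) R}

theorem mulVec_inv_mulVec (hM : IsUnit M.det) (v : Fin n₃ → R) : M *ᵥ (M⁻¹ *ᵥ v) = v := by
  rw [mulVec_mulVec, mul_nonsing_inv _ hM, one_mulVec]

theorem inv_mulVec_mulVec (hM : IsUnit M.det) (v : Fin n₃ → R) : M⁻¹ *ᵥ (M *ᵥ v) = v := by
  rw [mulVec_mulVec, nonsing_inv_mul _ hM, one_mulVec]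

theorem mulVec_tubMul (hM : IsUnit M.det) (a b : Fin n₃ → R) :
    M *ᵥ tubMul M a b = (M *ᵥ a) * (M *ᵥ b) :=
  mulVec_inv_mulVec hM _

theorem mulVec_tenMul (hM : IsUnit M.det) {ι κ μ : Type} [Fintype κ]
    (A : ι → κ → (Fin n₃ → R)) (B : κ → μ → (Fin n₃ → R)) (i : ι) (j : μ) :
    M *ᵥ tenMul M A B i j = ∑ ℓ, (M *ᵥ A i ℓ) * (M *ᵥ B ℓ j) := by
  simp only [tenMul, mulVec_sum, mulVec_tubMul hM]

theorem exists_tubMul_self_eq_of_mulVec_nonneg {M : Matrix (Fin n₃) (Fin n₃) ℝ}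
    (hM : IsUnit M.det) {lam : Fin n₃ → ℝ} (hlam : ∀ k, 0 ≤ (M *ᵥ lam) k) :
    ∃ x, tubMul M x x = lam := by
  refine ⟨M⁻¹ *ᵥ fun k => √((M *ᵥ lam) k), ?_⟩
  have hsqrt : (fun k => √((M *ᵥ lam) k)) * (fun k => √((M *ᵥ lam) k)) = M *ᵥ lam :=
    funext fun k => Real.mul_self_sqrt (hlam k)
  rw [tubMul, mulVec_inv_mulVec hM, hsqrt, inv_mulVec_mulVec hM]

end Transform

section FrontalSlice

variable {n₃ : ℕ} {R : Type} [CommRing R] {M : Matrix (Fin n₃) (Fin n₃) R} {ι κ : Type}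

/-- The part of `A` living on the `k`-th frontal slice of `A ×₃ M`. -/
def sliceProj (M : Matrix (Fin n₃) (Fin n₃) R) (k : Fin n₃) (A : ι → κ → (Fin n₃ → R)) :
    ι → κ → (Fin n₃ → R) :=
  fun i j => M⁻¹ *ᵥ Pi.single k ((M *ᵥ A i j) k)

theorem mulVec_sliceProj (hM : IsUnit M.det) (k : Fin n₃) (A : ι → κ → (Fin n₃ → R))
    (i : ι) (j : κ) : M *ᵥ sliceProj M k A i j = Pi.single k ((M *ᵥ A i j) k) :=
  mulVec_inv_mulVec hM _

theorem tenMul_sliceProj (hM : IsUnit M.det) {μ : Type} [Fintype κ] (k : Fin n₃)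
    (A : ι → κ → (Fin n₃ → R)) (B : κ → μ → (Fin n₃ → R)) :
    tenMul M A (sliceProj M k B) = sliceProj M k (tenMul M A B) := by
  funext i j
  apply mulVec_injective_of_isUnit ((isUnit_iff_isUnit_det M).2 hM)
  simp only [mulVec_sliceProj hM, mulVec_tenMul hM, ← Pi.single_mul_right, Finset.sum_apply,
    Pi.mul_apply]
  exact (map_sum (AddMonoidHom.single (fun _ : Fin n₃ => R) k) _ _).symm

end FrontalSlice

section Orthogonal

variable {n₃ : ℕ} {M : Matrix (Fin n₃) (Fin n₃) ℝ} {ι κ : Type} [Fintype ι] [Fintype κ]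

theorem dotProduct_mulVec_mulVec_of_orthogonal (hM : Mᵀ * M = 1) (a b : Fin n₃ → ℝ) :
    (M *ᵥ a) ⬝ᵥ (M *ᵥ b) = a ⬝ᵥ b := by
  rw [dotProduct_mulVec, ← mulVec_transpose, mulVec_mulVec, hM, one_mulVec]

theorem tenInner_sliceProj (hM : Mᵀ * M = 1) (k : Fin n₃) (A B : ι → κ → (Fin n₃ → ℝ)) :
    tenInner (sliceProj M k A) (sliceProj M k B) = ∑ i, ∑ j, (M *ᵥ A i j) k * (M *ᵥ B i j) k := by
  have hdet : IsUnit M.det := isUnit_det_of_left_inverse hM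
  refine Finset.sum_congr rfl fun i _ => Finset.sum_congr rfl fun j _ => ?_
  rw [← dotProduct, ← dotProduct_mulVec_mulVec_of_orthogonal hM, mulVec_sliceProj hdet,
    mulVec_sliceProj hdet, single_dotProduct, Pi.single_eq_same]

theorem mulVec_eigentube_nonneg_of_tenPSD (hM : Mᵀ * M = 1) {A : ι → ι → (Fin n₃ → ℝ)}
    (hA : tenPSD M A) {lam : Fin n₃ → ℝ} {X : ι → Fin 1 → (Fin n₃ → ℝ)}
    (heig : tenMul M A X = fun i j => tubMul M lam (X i j)) {k : Fin n₃}
    (hXk : ∃ i, (M *ᵥ X i 0) k ≠ 0) :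
    0 ≤ (M *ᵥ lam) k := by
  have hdet : IsUnit M.det := isUnit_det_of_left_inverse hM
  have hinner : tenInner (sliceProj M k X) (tenMul M A (sliceProj M k X)) =
      (M *ᵥ lam) k * ∑ i, (M *ᵥ X i 0) k ^ 2 := by
    simp only [tenMul_sliceProj hdet, tenInner_sliceProj hM, heig, mulVec_tubMul hdet,
      Pi.mul_apply, Fin.sum_univ_one, Finset.mul_sum]
    exact Finset.sum_congr rfl fun i _ => by ring
  have hpos : 0 < ∑ i, (M *ᵥ X i 0) k ^ 2 := by
    obtain ⟨i, hi⟩ := hXk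
    exact Finset.sum_pos' (fun _ _ => sq_nonneg _) ⟨i, Finset.mem_univ i, pow_two_pos_of_ne_zero hi⟩
  exact nonneg_of_mul_nonneg_left (hinner ▸ hA.2 (sliceProj M k X)) hpos

end Orthogonal

theorem eigentube_of_tenPSD_is_square_general (n₃ n : ℕ)
    (M : Matrix (Fin n₃) (Fin n₃) ℝ) (hM : Mᵀ * M = 1)
    (A : Fin n → Fin n → (Fin n₃ → ℝ)) (hA : tenPSD M A)
    (lam : Fin n₃ → ℝ) (X : Fin n → Fin 1 → (Fin n₃ → ℝ))
    (heig : tenMul M A X = fun i j => tubMul M lam (X i j))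
    (hX : ∀ k : Fin n₃, ∃ i : Fin n, (M *ᵥ X i 0) k ≠ 0) :
    ∃ x : Fin n₃ → ℝ, tubMul M x x = lam :=
  exists_tubMul_self_eq_of_mulVec_nonneg (isUnit_det_of_left_inverse hM)
    fun k => mulVec_eigentube_nonneg_of_tenPSD hM hA heig (hX k)

/-- If `A` is `⋆_M`-PSD, `A ⋆_M X = λ ⋆_M X`, and every frontal slice of
`X ×₃ M` is a nonzero vector, then the eigentube `λ` is a square in `ℝ_M`. -/
theorem eigentube_of_tenPSD_is_square (n₃ n : ℕ) (hn₃ : 1 ≤ n₃)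
    (M : Matrix (Fin n₃) (Fin n₃) ℝ) (hM : Mᵀ * M = 1)
    (A : Fin n → Fin n → (Fin n₃ → ℝ)) (hA : tenPSD M A)
    (lam : Fin n₃ → ℝ) (X : Fin n → Fin 1 → (Fin n₃ → ℝ))
    (heig : tenMul M A X = fun i j => tubMul M lam (X i j))
    (hX : ∀ k : Fin n₃, ∃ i : Fin n, (M *ᵥ X i 0) k ≠ 0) :
    ∃ x : Fin n₃ → ℝ, tubMul M x x = lam :=
  eigentube_of_tenPSD_is_square_general n₃ n M hM A hA lam X heig hX

end
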